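/- Define g₄ : [0,1] → ℝ by g₄(z) = (−z² + 10z − 3 + √(25−z)·(1−z)^{3/2}) / (2(z+2)). Then g₄ takes values in [0,1], and for every z ∈ [0,1] it satisfies the functional equation g₄(z) = (1 + z·g₄(g₄(z))) / 2. -/

import Mathlib

/-!
With `s(z) = √((25 - z)(1 - z))` we have `g₄(z) = (-z² + 10z - 3 + (1 - z) s(z)) / (2(z + 2))`.
The bounds `3(1 - z) ≤ s(z) ≤ 7 - z` give `z ≤ g₄(z) ≤ 1`. The key point is that `s(g₄(z))` is again
rational in `z` and `s(z)`, namely `((z - 1)(z + 11) + (z + 5) s(z)) / (2(z + 2))`, so the functional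
equation becomes a polynomial identity in `z` and `s(z)` that holds modulo `s(z)² = (25 - z)(1 - z)`.
-/

namespace VEP

/-- The generating function `g₄` for the complete binary tree model with natural embedding:
`g₄(z) = (−z² + 10z − 3 + √(25−z)(1−z)^{3/2}) / (2(z+2))`. -/
noncomputable def g4 (z : ℝ) : ℝ :=
  (-z ^ 2 + 10 * z - 3 + Real.sqrt (25 - z) * (1 - z) ^ ((3 : ℝ) / 2)) / (2 * (z + 2))

open Real

lemma g4_eq_sqrt {z : ℝ} (hz : z ≤ 1) :
    g4 z = (-z ^ 2 + 10 * z - 3 + (1 - z) * √((25 - z) * (1 - z))) / (2 * (z + 2)) := by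
  rw [g4, show (3 : ℝ) / 2 = 1 + 1 / 2 by norm_num, rpow_add' (by linarith) (by norm_num),
    rpow_one, ← sqrt_eq_rpow, sqrt_mul (by linarith)]
  ring

lemma three_mul_one_sub_le_sqrt {z : ℝ} (hz₀ : -2 ≤ z) (hz₁ : z ≤ 1) :
    3 * (1 - z) ≤ √((25 - z) * (1 - z)) :=
  le_sqrt_of_sq_le (by nlinarith)

lemma sqrt_le_seven_sub {z : ℝ} (hz₀ : -2 ≤ z) (hz₁ : z ≤ 1) :
    √((25 - z) * (1 - z)) ≤ 7 - z :=
  sqrt_le_iff.mpr ⟨by linarith, by nlinarith⟩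

lemma le_g4 {z : ℝ} (hz₀ : -2 < z) (hz₁ : z ≤ 1) : z ≤ g4 z := by
  rw [g4_eq_sqrt hz₁, le_div_iff₀ (by linarith)]
  nlinarith [mul_le_mul_of_nonneg_left (three_mul_one_sub_le_sqrt hz₀.le hz₁)
    (sub_nonneg.mpr hz₁)]

lemma g4_le_one {z : ℝ} (hz₀ : -2 < z) (hz₁ : z ≤ 1) : g4 z ≤ 1 := by
  rw [g4_eq_sqrt hz₁, div_le_one (by linarith)]
  nlinarith [mul_le_mul_of_nonneg_left (sqrt_le_seven_sub hz₀.le hz₁) (sub_nonneg.mpr hz₁)]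

lemma sqrt_twentyfive_sub_g4_mul_one_sub_g4 {z : ℝ} (hz₀ : -2 < z) (hz₁ : z ≤ 1) :
    √((25 - g4 z) * (1 - g4 z)) =
      ((z - 1) * (z + 11) + (z + 5) * √((25 - z) * (1 - z))) / (2 * (z + 2)) := by
  have hs := three_mul_one_sub_le_sqrt hz₀.le hz₁
  have hs2 : √((25 - z) * (1 - z)) ^ 2 = (25 - z) * (1 - z) := sq_sqrt (by nlinarith)
  have hz₂ : z + 2 ≠ 0 := by linarith
  have hS : 0 ≤ (z - 1) * (z + 11) + (z + 5) * √((25 - z) * (1 - z)) := by nlinarith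
  rw [← sqrt_sq (div_nonneg hS (by linarith : (0 : ℝ) ≤ 2 * (z + 2))), g4_eq_sqrt hz₁]
  congr 1
  generalize √((25 - z) * (1 - z)) = s at *
  field_simp
  linear_combination ((1 - z) ^ 2 - (z + 5) ^ 2) * hs2

lemma g4_eq_one_add_mul_g4_g4 {z : ℝ} (hz₀ : -2 < z) (hz₁ : z ≤ 1) :
    g4 z = (1 + z * g4 (g4 z)) / 2 := by
  set w := g4 z with hw
  have hw₂ : w + 2 ≠ 0 := by linarith [le_g4 hz₀ hz₁]
  have key : (2 * w - 1) * (2 * (w + 2)) =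
      z * (-w ^ 2 + 10 * w - 3 + (1 - w) * √((25 - w) * (1 - w))) := by
    have hs2 : √((25 - z) * (1 - z)) ^ 2 = (25 - z) * (1 - z) := sq_sqrt (by nlinarith)
    have hz₂ : z + 2 ≠ 0 := by linarith
    rw [sqrt_twentyfive_sub_g4_mul_one_sub_g4 hz₀ hz₁, hw, g4_eq_sqrt hz₁]
    generalize √((25 - z) * (1 - z)) = s at *
    field_simp
    linear_combination (1 - z) * (4 + 2 * z) * hs2
  have hzgw : z * g4 w = 2 * w - 1 := by
    rw [g4_eq_sqrt (g4_le_one hz₀ hz₁), mul_div_assoc', ← key, mul_div_cancel_right₀ _ (by simpa)]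
  linarith

/-- `g₄` maps `[0,1]` into `[0,1]` and satisfies `g₄(z) = (1 + z·g₄(g₄(z))) / 2` there. -/
theorem g4_functional_equation :
    (∀ z ∈ Set.Icc (0 : ℝ) 1, g4 z ∈ Set.Icc (0 : ℝ) 1) ∧
    (∀ z ∈ Set.Icc (0 : ℝ) 1, g4 z = (1 + z * g4 (g4 z)) / 2) := by
  have neg_two_lt : ∀ z ∈ Set.Icc (0 : ℝ) 1, -2 < z := fun z hz => by linarith [hz.1]
  exact ⟨fun z hz => ⟨hz.1.trans (le_g4 (neg_two_lt z hz) hz.2), g4_le_one (neg_two_lt z hz) hz.2⟩,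
    fun z hz => g4_eq_one_add_mul_g4_g4 (neg_two_lt z hz) hz.2⟩

end VEP
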